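/- For the complete bipartite graph K_{p,q} with p, q ≥ 1, γ_I(K_{p,q} ⊙ K_1) = p + q + 1 if p = 1 or q = 1, and γ_I(K_{p,q} ⊙ K_1) = p + q + 2 otherwise. -/

import Mathlib

open SimpleGraph Finset
open scoped Classical

/-- An Italian dominating function: values in {0,1,2}, and every vertex with
value 0 has neighbor values summing to at least 2. -/
def IsItalian {V : Type*} [Fintype V] (G : SimpleGraph V) (f : V → ℕ) : Prop :=
  (∀ v, f v ≤ 2) ∧
    ∀ v, f v = 0 → 2 ≤ ∑ u ∈ Finset.univ.filter (fun w => G.Adj v w), f u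

/-- The Italian domination number: minimum weight of an Italian dominating function. -/
noncomputable def italianDomNumber {V : Type*} [Fintype V] (G : SimpleGraph V) : ℕ :=
  sInf {w | ∃ f : V → ℕ, IsItalian G f ∧ ∑ v, f v = w}

/-- The corona `G ⊙ K₁`: attach one pendant vertex (an `inr` copy) to each vertex of `G`. -/
def coronaK1 {V : Type*} (G : SimpleGraph V) : SimpleGraph (V ⊕ V) :=
  SimpleGraph.fromRel (fun a b =>
    match a, b with
    | Sum.inl u, Sum.inl v => G.Adj u v
    | Sum.inl u, Sum.inr v => u = v
    | Sum.inr u, Sum.inl v => u = v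
    | Sum.inr _, Sum.inr _ => False)

/-- The corona `G ⊙ H`: one copy of `H` per vertex of `G`, each joined to that vertex. -/
def corona {V W : Type*} (G : SimpleGraph V) (H : SimpleGraph W) :
    SimpleGraph (V ⊕ V × W) :=
  SimpleGraph.fromRel (fun a b =>
    match a, b with
    | Sum.inl u, Sum.inl v => G.Adj u v
    | Sum.inl u, Sum.inr p => u = p.1
    | Sum.inr p, Sum.inl v => p.1 = v
    | Sum.inr p, Sum.inr q => p.1 = q.1 ∧ H.Adj p.2 q.2)


/-!
Each vertex `v` of `G` contributes `f (inl v) + f (inr v) ≥ 1` to the weight of an Italian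
function `f` on `G ⊙ K₁`, since a pendant vertex of value `0` forces value `2` on its neighbour.
Call `v` heavy when its contribution is at least `2`; a light vertex has value `0` and a pendant
of value `1`, so it needs a heavy neighbour. Hence heavy vertices exist and the weight is at least
`n + 1`, with equality only if a single heavy vertex is adjacent to all others. Conversely a
dominating set `D` of `G` gives an Italian function of weight `n + |D|`: `2` on `D` and `1` on the
pendants outside `D`. In `K_{p,q}` a single vertex dominates iff `p = 1` or `q = 1`, and one
vertex from each side always dominates.
-/

open Sum

section Corona

variable {V : Type*} {G : SimpleGraph V}

@[simp]
lemma coronaK1_adj_inl_inl {u v : V} : (coronaK1 G).Adj (inl u) (inl v) ↔ G.Adj u v := by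
  simp only [coronaK1, fromRel_adj, ne_eq, inl.injEq]
  exact ⟨fun ⟨_, h⟩ => h.elim id .symm, fun h => ⟨h.ne, .inl h⟩⟩

@[simp]
lemma coronaK1_adj_inl_inr {u v : V} : (coronaK1 G).Adj (inl u) (inr v) ↔ u = v := by
  simp [coronaK1, eq_comm]

@[simp]
lemma coronaK1_adj_inr_inl {u v : V} : (coronaK1 G).Adj (inr u) (inl v) ↔ u = v := by
  simp [coronaK1, eq_comm]

@[simp]
lemma coronaK1_not_adj_inr_inr {u v : V} : ¬(coronaK1 G).Adj (inr u) (inr v) := by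
  simp [coronaK1]

variable [Fintype V]

lemma sum_coronaK1_eq (f : V ⊕ V → ℕ) : ∑ x, f x = ∑ v, (f (inl v) + f (inr v)) := by
  rw [Fintype.sum_sum_type, sum_add_distrib]

lemma coronaK1_sum_adj_inl (f : V ⊕ V → ℕ) (v : V) :
    ∑ x ∈ univ.filter (fun w => (coronaK1 G).Adj (inl v) w), f x =
      f (inr v) + ∑ u ∈ univ.filter (fun w => G.Adj v w), f (inl u) := by
  simp only [sum_filter, Fintype.sum_sum_type, coronaK1_adj_inl_inl, coronaK1_adj_inl_inr,
    sum_ite_eq, mem_univ, if_true]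
  ring

lemma coronaK1_sum_adj_inr (f : V ⊕ V → ℕ) (v : V) :
    ∑ x ∈ univ.filter (fun w => (coronaK1 G).Adj (inr v) w), f x = f (inl v) := by
  simp [sum_filter, Fintype.sum_sum_type]

end Corona

namespace IsItalian

variable {V : Type*} [Fintype V] {G : SimpleGraph V} {f : V ⊕ V → ℕ}

lemma inl_eq_two_of_inr_eq_zero (hf : IsItalian (coronaK1 G) f) {v : V} (hv : f (inr v) = 0) :
    f (inl v) = 2 := by
  have := hf.2 _ hv
  rw [coronaK1_sum_adj_inr] at this
  exact le_antisymm (hf.1 _) this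

lemma one_le_inl_add_inr (hf : IsItalian (coronaK1 G) f) (v : V) :
    1 ≤ f (inl v) + f (inr v) := by
  by_cases hv : f (inr v) = 0
  · simp [hf.inl_eq_two_of_inr_eq_zero hv, hv]
  · omega

lemma inl_eq_zero_of_inl_add_inr_le_one (hf : IsItalian (coronaK1 G) f) {v : V}
    (hv : f (inl v) + f (inr v) ≤ 1) : f (inl v) = 0 := by
  by_cases h : f (inr v) = 0
  · have := hf.inl_eq_two_of_inr_eq_zero h
    omega
  · omega

lemma exists_adj_two_le_inl_add_inr (hf : IsItalian (coronaK1 G) f) {v : V}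
    (hv : f (inl v) + f (inr v) ≤ 1) : ∃ u, G.Adj v u ∧ 2 ≤ f (inl u) + f (inr u) := by
  by_contra! h
  have hsum := hf.2 _ (hf.inl_eq_zero_of_inl_add_inr_le_one hv)
  have hzero : ∑ u ∈ univ.filter (fun w => G.Adj v w), f (inl u) = 0 :=
    sum_eq_zero fun u hu =>
      hf.inl_eq_zero_of_inl_add_inr_le_one (Nat.le_of_lt_succ (h u (mem_filter.mp hu).2))
  rw [coronaK1_sum_adj_inl, hzero] at hsum
  omega

lemma exists_two_le_inl_add_inr [Nonempty V] (hf : IsItalian (coronaK1 G) f) :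
    ∃ w, 2 ≤ f (inl w) + f (inr w) := by
  obtain ⟨v⟩ := ‹Nonempty V›
  by_cases hv : 2 ≤ f (inl v) + f (inr v)
  · exact ⟨v, hv⟩
  · obtain ⟨u, -, hu⟩ := hf.exists_adj_two_le_inl_add_inr (v := v) (by omega)
    exact ⟨u, hu⟩

lemma card_add_card_heavy_le_sum (hf : IsItalian (coronaK1 G) f) :
    Fintype.card V + #{v | 2 ≤ f (inl v) + f (inr v)} ≤ ∑ x, f x := by
  rw [sum_coronaK1_eq, card_filter, Fintype.card, card_eq_sum_ones, ← sum_add_distrib]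
  refine sum_le_sum fun v _ => ?_
  have := hf.one_le_inl_add_inr v
  split_ifs <;> omega

lemma card_add_one_le_sum [Nonempty V] (hf : IsItalian (coronaK1 G) f) :
    Fintype.card V + 1 ≤ ∑ x, f x := by
  obtain ⟨w, hw⟩ := hf.exists_two_le_inl_add_inr
  have : 0 < #{v | 2 ≤ f (inl v) + f (inr v)} := card_pos.mpr ⟨w, by simpa using hw⟩
  have := hf.card_add_card_heavy_le_sum
  omega

lemma exists_forall_adj_of_sum_le [Nonempty V] (hf : IsItalian (coronaK1 G) f)
    (hsum : ∑ x, f x ≤ Fintype.card V + 1) : ∃ w, ∀ v ≠ w, G.Adj v w := by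
  have hheavy : #{v | 2 ≤ f (inl v) + f (inr v)} ≤ 1 := by
    have := hf.card_add_card_heavy_le_sum
    omega
  have huniq {u w : V} (hu : 2 ≤ f (inl u) + f (inr u)) (hw : 2 ≤ f (inl w) + f (inr w)) :
      u = w :=
    card_le_one.mp hheavy u (by simpa using hu) w (by simpa using hw)
  obtain ⟨w, hw⟩ := hf.exists_two_le_inl_add_inr
  refine ⟨w, fun v hvw => ?_⟩
  have hv : f (inl v) + f (inr v) ≤ 1 := by
    by_contra! hv
    exact hvw (huniq hv hw)
  obtain ⟨u, hvu, hu⟩ := hf.exists_adj_two_le_inl_add_inr hv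
  rwa [← huniq hu hw]

end IsItalian

section ItalianDomNumber

variable {V : Type*} [Fintype V] {G : SimpleGraph V}

lemma italianDomNumber_le {f : V → ℕ} (hf : IsItalian G f) :
    italianDomNumber G ≤ ∑ v, f v :=
  Nat.sInf_le ⟨f, hf, rfl⟩

lemma exists_isItalian_sum_eq_italianDomNumber (G : SimpleGraph V) :
    ∃ f, IsItalian G f ∧ ∑ v, f v = italianDomNumber G :=
  Nat.sInf_mem (s := {w | ∃ f : V → ℕ, IsItalian G f ∧ ∑ v, f v = w})
    ⟨_, fun _ => 2, ⟨fun _ => le_rfl, fun _ h => absurd h two_ne_zero⟩, rfl⟩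

noncomputable def italianOfDominating (D : Finset V) : V ⊕ V → ℕ :=
  Sum.elim (fun v => if v ∈ D then 2 else 0) (fun v => if v ∈ D then 0 else 1)

lemma isItalian_italianOfDominating {D : Finset V} (hD : ∀ v ∉ D, ∃ u ∈ D, G.Adj v u) :
    IsItalian (coronaK1 G) (italianOfDominating D) := by
  refine ⟨fun x => ?_, fun x hx => ?_⟩
  · rcases x with v | v <;> simp only [italianOfDominating, elim_inl, elim_inr] <;> split_ifs <;>
      omega
  rcases x with v | v
  · have hvD : v ∉ D := by simpa [italianOfDominating] using hx
    obtain ⟨u, huD, hvu⟩ := hD v hvD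
    rw [coronaK1_sum_adj_inl]
    calc 2 = italianOfDominating D (inl u) := by simp [italianOfDominating, huD]
      _ ≤ ∑ u ∈ univ.filter (fun w => G.Adj v w), italianOfDominating D (inl u) :=
        single_le_sum (f := fun u => italianOfDominating D (inl u)) (fun _ _ => Nat.zero_le _)
          (mem_filter.mpr ⟨mem_univ u, hvu⟩)
      _ ≤ _ := Nat.le_add_left _ _
  · have hvD : v ∈ D := by simpa [italianOfDominating] using hx
    simp [coronaK1_sum_adj_inr, italianOfDominating, hvD]

lemma sum_italianOfDominating (D : Finset V) :
    ∑ x, italianOfDominating D x = Fintype.card V + #D := by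
  have hpair (v : V) :
      italianOfDominating D (inl v) + italianOfDominating D (inr v) =
        1 + if v ∈ D then 1 else 0 := by
    simp only [italianOfDominating, elim_inl, elim_inr]
    split_ifs <;> rfl
  rw [sum_coronaK1_eq, sum_congr rfl fun v _ => hpair v, sum_add_distrib]
  simp

lemma italianDomNumber_coronaK1_le (D : Finset V) (hD : ∀ v ∉ D, ∃ u ∈ D, G.Adj v u) :
    italianDomNumber (coronaK1 G) ≤ Fintype.card V + #D :=
  sum_italianOfDominating (V := V) D ▸ italianDomNumber_le (isItalian_italianOfDominating hD)

lemma italianDomNumber_coronaK1_eq_card_add_one (c : V) (hc : ∀ v ≠ c, G.Adj v c) :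
    italianDomNumber (coronaK1 G) = Fintype.card V + 1 := by
  refine le_antisymm ?_ ?_
  · simpa using italianDomNumber_coronaK1_le {c} fun v hv =>
      ⟨c, mem_singleton_self c, hc v (by simpa using hv)⟩
  · have : Nonempty V := ⟨c⟩
    obtain ⟨f, hf, hsum⟩ := exists_isItalian_sum_eq_italianDomNumber (coronaK1 G)
    exact hsum ▸ hf.card_add_one_le_sum

lemma card_add_two_le_italianDomNumber_coronaK1 [Nonempty V]
    (hG : ∀ w, ∃ v ≠ w, ¬G.Adj v w) :
    Fintype.card V + 2 ≤ italianDomNumber (coronaK1 G) := by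
  obtain ⟨f, hf, hsum⟩ := exists_isItalian_sum_eq_italianDomNumber (coronaK1 G)
  by_contra! h
  obtain ⟨w, hw⟩ := hf.exists_forall_adj_of_sum_le (by omega)
  obtain ⟨v, hvw, hnadj⟩ := hG w
  exact hnadj (hw v hvw)

end ItalianDomNumber

section CompleteBipartite

variable {V W : Type*}

lemma completeBipartiteGraph_adj_inl_of_subsingleton [Subsingleton V] (a : V) :
    ∀ v ≠ inl a, (completeBipartiteGraph V W).Adj v (inl a) := by
  rintro (a' | b) h
  · exact absurd (congrArg inl (Subsingleton.elim a' a)) h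
  · simp

lemma completeBipartiteGraph_adj_inr_of_subsingleton [Subsingleton W] (b : W) :
    ∀ v ≠ inr b, (completeBipartiteGraph V W).Adj v (inr b) := by
  rintro (a | b') h
  · simp
  · exact absurd (congrArg inr (Subsingleton.elim b' b)) h

lemma completeBipartiteGraph_exists_ne_not_adj [Nontrivial V] [Nontrivial W] (w : V ⊕ W) :
    ∃ v ≠ w, ¬(completeBipartiteGraph V W).Adj v w := by
  rcases w with a | b
  · obtain ⟨a', ha'⟩ := exists_ne a
    exact ⟨inl a', by simpa using ha', by simp⟩
  · obtain ⟨b', hb'⟩ := exists_ne b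
    exact ⟨inr b', by simpa using hb', by simp⟩

lemma completeBipartiteGraph_exists_adj_inl_or_inr (a : V) (b : W) (v : V ⊕ W) :
    ∃ u ∈ ({inl a, inr b} : Finset (V ⊕ W)), (completeBipartiteGraph V W).Adj v u := by
  rcases v with a' | b'
  · exact ⟨inr b, by simp, by simp⟩
  · exact ⟨inl a, by simp, by simp⟩

end CompleteBipartite

theorem italian_coronaK1_completeBipartite (p q : ℕ) (hp : 1 ≤ p) (hq : 1 ≤ q) :
    (p = 1 ∨ q = 1 →
      italianDomNumber (coronaK1 (completeBipartiteGraph (Fin p) (Fin q))) = p + q + 1) ∧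
    (p ≠ 1 ∧ q ≠ 1 →
      italianDomNumber (coronaK1 (completeBipartiteGraph (Fin p) (Fin q))) = p + q + 2) := by
  have hcard : Fintype.card (Fin p ⊕ Fin q) = p + q := by simp
  refine ⟨?_, fun ⟨hp1, hq1⟩ => ?_⟩
  · rintro (rfl | rfl)
    · simpa [hcard] using italianDomNumber_coronaK1_eq_card_add_one _
        (completeBipartiteGraph_adj_inl_of_subsingleton (W := Fin q) (0 : Fin 1))
    · simpa [hcard] using italianDomNumber_coronaK1_eq_card_add_one _
        (completeBipartiteGraph_adj_inr_of_subsingleton (V := Fin p) (0 : Fin 1))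
  have : NeZero p := ⟨by omega⟩
  have : NeZero q := ⟨by omega⟩
  have : Nontrivial (Fin p) := Fin.nontrivial_iff_two_le.mpr (by omega)
  have : Nontrivial (Fin q) := Fin.nontrivial_iff_two_le.mpr (by omega)
  refine le_antisymm ?_ ?_
  · calc _ ≤ p + q + #({inl 0, inr 0} : Finset (Fin p ⊕ Fin q)) :=
          hcard ▸ italianDomNumber_coronaK1_le _ fun v _ =>
            completeBipartiteGraph_exists_adj_inl_or_inr 0 0 v
      _ = p + q + 2 := by simp
  · simpa [hcard] using card_add_two_le_italianDomNumber_coronaK1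
      (completeBipartiteGraph_exists_ne_not_adj (V := Fin p) (W := Fin q))
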